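/- arXiv:2301.03521 — 3 statements merged into one kernel-verified Lean document; each statement's English description precedes it below -/
import Mathlib

section
/- Let U₀,...,U_{N−1} be invertible n×n complex matrices satisfying Uⱼ* J Uⱼ' = J where Uⱼ' is a second family (i.e., U(λ̄)* J U(λ) = J blockwise). Let 𝒰 = diag(U₀,...,U_{N−1}), 𝒰' = diag(U₀',...,U'_{N−1}), 𝒥 = diag(J,...,J) (N blocks), ℬ, ℬ' block diagonal N×N matrices of n×n blocks with ℬ − (ℬ')* = 2𝒥 entrywise-blockwise, E_⊤, E_⊥ : ℂ^{n(N+1)} → ℂ^{nN} the maps stripping the first resp. last n coordinates. Define 𝔹 = (ℬ')* 𝒰 E_⊥ + ℬ E_⊤ and 𝔻 = (1/2)(𝒰 E_⊥ + E_⊤), and similarly 𝔹' = ℬ* 𝒰' E_⊥ + ℬ' E_⊤, 𝔻' = (1/2)(𝒰' E_⊥ + E_⊤). Then (𝔻')* 𝔹 − (𝔹')* 𝔻 = diag(−J, 0, ..., 0, J) as a map on ℂ^{n(N+1)}, where the nonzero blocks are in the first and last n×n diagonal positions. -/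
/-!
Expanding the products, the cross terms cancel and
`𝔻'* 𝔹 - 𝔹'* 𝔻 = ½ (E_⊤* (ℬ - ℬ'*) E_⊤ - E_⊥* 𝒰'* (ℬ - ℬ'*) 𝒰 E_⊥) = E_⊤* 𝒥 E_⊤ - E_⊥* 𝒥 E_⊥`
by the two hypotheses. As `E_⊤` and `E_⊥` select block rows, `E_⊤* 𝒥 E_⊤` is `diag(0, J, …, J)`
and `E_⊥* 𝒥 E_⊥` is `diag(J, …, J, 0)`, whose difference is `diag(-J, 0, …, 0, J)`.
-/

open scoped Matrix

/-- The matrix stripping the first `n` components of a vector in `ℂ^{n(M+2)}`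
(block index second, as in `Matrix.blockDiagonal`). -/
noncomputable def ETop (n M : ℕ) : Matrix (Fin n × Fin (M + 1)) (Fin n × Fin (M + 2)) ℂ :=
  fun p q => if q = (p.1, p.2.succ) then 1 else 0

/-- The matrix stripping the last `n` components of a vector in `ℂ^{n(M+2)}`. -/
noncomputable def EBot (n M : ℕ) : Matrix (Fin n × Fin (M + 1)) (Fin n × Fin (M + 2)) ℂ :=
  fun p q => if q = (p.1, p.2.castSucc) then 1 else 0

namespace Matrix

theorem lagrange_identity {R ι m : Type*} [Fintype ι] [Ring R] [StarRing R]
    (B B' U U' K : Matrix ι ι R) (ET EB : Matrix ι m R)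
    (hB : B - B'ᴴ = K) (hU : U'ᴴ * K * U = K) :
    (U' * EB + ET)ᴴ * (B'ᴴ * U * EB + B * ET) - (Bᴴ * U' * EB + B' * ET)ᴴ * (U * EB + ET)
      = ETᴴ * K * ET - EBᴴ * K * EB := by
  have expand : (U' * EB + ET)ᴴ * (B'ᴴ * U * EB + B * ET)
      - (Bᴴ * U' * EB + B' * ET)ᴴ * (U * EB + ET)
      = ETᴴ * (B - B'ᴴ) * ET - EBᴴ * (U'ᴴ * (B - B'ᴴ) * U) * EB := by
    simp only [conjTranspose_add, conjTranspose_mul, conjTranspose_conjTranspose,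
      Matrix.add_mul, Matrix.mul_add, Matrix.sub_mul, Matrix.mul_sub, Matrix.mul_assoc]
    abel
  rw [expand, hB, hU]

section Selection

variable {R ι κ : Type*} [Fintype ι] [DecidableEq κ] [NonAssocSemiring R] [StarRing R]
  {g : ι → κ}

theorem conjTranspose_one_submatrix_mul_mul_apply (hg : g.Injective) (A : Matrix ι ι R)
    (a b : ι) :
    (((1 : Matrix κ κ R).submatrix g id)ᴴ * A * (1 : Matrix κ κ R).submatrix g id) (g a) (g b)
      = A a b := by
  classical
  simp [mul_apply, one_apply, hg.eq_iff]

theorem conjTranspose_one_submatrix_mul_mul_apply_of_notMem (A : Matrix ι ι R) {k l : κ}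
    (h : k ∉ Set.range g ∨ l ∉ Set.range g) :
    (((1 : Matrix κ κ R).submatrix g id)ᴴ * A * (1 : Matrix κ κ R).submatrix g id) k l = 0 := by
  rcases h with h | h <;>
  · simp only [Set.mem_range, not_exists] at h
    simp [mul_apply, one_apply, h, Ne.symm (h _)]

end Selection

section BlockSelection

variable {R m α β : Type*} [Fintype m] [DecidableEq m] [Fintype α] [DecidableEq α]
  [DecidableEq β] [NonAssocSemiring R] [StarRing R] {σ : α → β}

theorem conjTranspose_one_submatrix_mul_blockDiagonal_const_mul_apply (hσ : σ.Injective)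
    (J : Matrix m m R) (p q : m × β) :
    (((1 : Matrix (m × β) (m × β) R).submatrix (Prod.map id σ) id)ᴴ
        * blockDiagonal (fun _ : α => J)
        * (1 : Matrix (m × β) (m × β) R).submatrix (Prod.map id σ) id) p q
      = if p.2 = q.2 ∧ p.2 ∈ Set.range σ then J p.1 q.1 else 0 := by
  have hg : (Prod.map id σ : m × α → m × β).Injective := Function.injective_id.prodMap hσ
  by_cases hpq : p.2 ∈ Set.range σ ∧ q.2 ∈ Set.range σ
  · obtain ⟨⟨i, hi⟩, ⟨j, hj⟩⟩ := hpq
    obtain ⟨p1, p2⟩ := p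
    obtain ⟨q1, q2⟩ := q
    dsimp only at hi hj
    subst hi hj
    rw [show ((p1, σ i) : m × β) = Prod.map id σ (p1, i) from rfl,
      show ((q1, σ j) : m × β) = Prod.map id σ (q1, j) from rfl,
      conjTranspose_one_submatrix_mul_mul_apply hg]
    simp [blockDiagonal_apply, hσ.eq_iff]
  · have hrange (r : m × β) : r ∈ Set.range (Prod.map id σ) ↔ r.2 ∈ Set.range σ := by
      simp [Set.range_prodMap]
    rw [conjTranspose_one_submatrix_mul_mul_apply_of_notMem _
      (by rwa [hrange, hrange, ← not_and_or]), if_neg]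
    rintro ⟨hpq₂, hp⟩
    exact hpq ⟨hp, hpq₂ ▸ hp⟩

end BlockSelection

end Matrix

theorem ETop_eq_submatrix_one (n M : ℕ) :
    ETop n M = (1 : Matrix (Fin n × Fin (M + 2)) (Fin n × Fin (M + 2)) ℂ).submatrix
      (Prod.map id Fin.succ) id := by
  ext p q
  simp [ETop, Matrix.one_apply, eq_comm, Prod.map]

theorem EBot_eq_submatrix_one (n M : ℕ) :
    EBot n M = (1 : Matrix (Fin n × Fin (M + 2)) (Fin n × Fin (M + 2)) ℂ).submatrix
      (Prod.map id Fin.castSucc) id := by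
  ext p q
  simp [EBot, Matrix.one_apply, eq_comm, Prod.map]

/-- Lemma 2.4 (first identity): `𝔻'* 𝔹 - 𝔹'* 𝔻 = diag(-J, 0, ..., 0, J)`,
with `N = M + 1` interior points. -/
theorem stmt_4 (n M : ℕ) (J : Matrix (Fin n) (Fin n) ℂ)
    (Bf B'f Uf U'f : Fin (M + 1) → Matrix (Fin n) (Fin n) ℂ)
    (𝒥 : Matrix (Fin n × Fin (M + 1)) (Fin n × Fin (M + 1)) ℂ)
    (h𝒥 : 𝒥 = Matrix.blockDiagonal fun _ => J)
    (hU : (Matrix.blockDiagonal U'f)ᴴ * 𝒥 * Matrix.blockDiagonal Uf = 𝒥)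
    (hB : Matrix.blockDiagonal Bf - (Matrix.blockDiagonal B'f)ᴴ = (2 : ℂ) • 𝒥)
    (𝔹 𝔻 𝔹' 𝔻' : Matrix (Fin n × Fin (M + 1)) (Fin n × Fin (M + 2)) ℂ)
    (h𝔹 : 𝔹 = (Matrix.blockDiagonal B'f)ᴴ * Matrix.blockDiagonal Uf * EBot n M
      + Matrix.blockDiagonal Bf * ETop n M)
    (h𝔻 : 𝔻 = (1/2 : ℂ) • (Matrix.blockDiagonal Uf * EBot n M + ETop n M))
    (h𝔹' : 𝔹' = (Matrix.blockDiagonal Bf)ᴴ * Matrix.blockDiagonal U'f * EBot n M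
      + Matrix.blockDiagonal B'f * ETop n M)
    (h𝔻' : 𝔻' = (1/2 : ℂ) • (Matrix.blockDiagonal U'f * EBot n M + ETop n M)) :
    𝔻'ᴴ * 𝔹 - 𝔹'ᴴ * 𝔻
      = fun p q =>
        if p.2 = q.2 then
          (if p.2 = 0 then -J p.1 q.1 else if p.2 = Fin.last (M + 1) then J p.1 q.1 else 0)
        else 0 := by
  have hU₂ : (Matrix.blockDiagonal U'f)ᴴ * ((2 : ℂ) • 𝒥) * Matrix.blockDiagonal Uf
      = (2 : ℂ) • 𝒥 := by
    rw [Matrix.mul_smul, Matrix.smul_mul, hU]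
  have hform :
      𝔻'ᴴ * 𝔹 - 𝔹'ᴴ * 𝔻 = (ETop n M)ᴴ * 𝒥 * ETop n M - (EBot n M)ᴴ * 𝒥 * EBot n M := by
    have hlagrange := Matrix.lagrange_identity _ _ _ _ _ (ETop n M) (EBot n M) hB hU₂
    have hhalf : star (1 / 2 : ℂ) = 1 / 2 := by simp
    rw [h𝔹, h𝔻, h𝔹', h𝔻', Matrix.conjTranspose_smul, hhalf, Matrix.smul_mul, Matrix.mul_smul,
      ← smul_sub, hlagrange, Matrix.mul_smul, Matrix.smul_mul, Matrix.mul_smul, Matrix.smul_mul,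
      ← smul_sub, smul_smul]
    norm_num
  subst h𝒥
  ext p q
  rw [hform, Matrix.sub_apply, ETop_eq_submatrix_one, EBot_eq_submatrix_one,
    Matrix.conjTranspose_one_submatrix_mul_blockDiagonal_const_mul_apply (Fin.succ_injective _),
    Matrix.conjTranspose_one_submatrix_mul_blockDiagonal_const_mul_apply (Fin.castSucc_injective _)]
  simp only [Set.mem_range, Fin.exists_succ_eq, Fin.exists_castSucc_eq]
  have hzero_ne_last : (0 : Fin (M + 2)) ≠ Fin.last (M + 1) := Fin.last_pos.ne
  split_ifs <;> simp_all
end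

section
/- With the setup of the previous lemma (matrices 𝔹, 𝔻 : ℂ^{n(N+1)} → ℂ^{nN} built from λ, and 𝔹', 𝔻' built from λ̄, satisfying (𝒰')*𝒥𝒰 = 𝒥 and ℬ − (ℬ')* = 2𝒥, and with N ≥ 2 letting 𝔹_m', 𝔻_m' denote the matrices obtained from 𝔹', 𝔻' by deleting the first and last n columns), one has (𝔻_m')* 𝔹 − (𝔹_m')* 𝔻 = 0. -/
/-!
Write `T = ETop n M` and `L = EBot n M`. Expanding the products, the cross terms cancel and
`𝒰'ᴴ 𝒥 𝒰 = 𝒥`, `ℬ - ℬ'ᴴ = 2𝒥` turn what is left into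
`𝔻'ᴴ 𝔹 - 𝔹'ᴴ 𝔻 = Tᴴ 𝒥 T - Lᴴ 𝒥 L = diag(-J, 0, …, 0, J)`. A block-constant `𝒥` commutes
past `T` and `L`, and `TᴴT`, `LᴴL` are the identity on the middle blocks, so both terms have the
same middle rows.
-/

open scoped Matrix

/-- The embedding `ℂ^{nM} → ℂ^{n(M+2)}` onto the middle coordinates; composing with it
deletes the first and last `n` columns of a matrix with `n(M+2)` columns. -/
noncomputable def EMid (n M : ℕ) : Matrix (Fin n × Fin (M + 2)) (Fin n × Fin M) ℂ :=
  fun p q => if p = (q.1, q.2.succ.castSucc) then 1 else 0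

namespace Matrix

theorem conjTranspose_mul_sub_conjTranspose_mul_eq_sub {𝕜 m k : Type*} [RCLike 𝕜] [Fintype m]
    {J U U' B B' : Matrix m m 𝕜} {T L : Matrix m k 𝕜}
    (hU : U'ᴴ * J * U = J) (hB : B - B'ᴴ = (2 : 𝕜) • J) :
    ((1 / 2 : 𝕜) • (U' * L + T))ᴴ * (B'ᴴ * U * L + B * T)
        - (Bᴴ * U' * L + B' * T)ᴴ * ((1 / 2 : 𝕜) • (U * L + T))
      = Tᴴ * J * T - Lᴴ * J * L := by
  have expand : ((1 / 2 : 𝕜) • (U' * L + T))ᴴ * (B'ᴴ * U * L + B * T)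
        - (Bᴴ * U' * L + B' * T)ᴴ * ((1 / 2 : 𝕜) • (U * L + T))
      = (1 / 2 : 𝕜) • (Tᴴ * (B - B'ᴴ) * T - Lᴴ * (U'ᴴ * (B - B'ᴴ) * U) * L) := by
    simp only [conjTranspose_add, conjTranspose_smul, conjTranspose_mul,
      conjTranspose_conjTranspose, Matrix.add_mul, Matrix.mul_add, Matrix.sub_mul,
      Matrix.mul_sub, Matrix.smul_mul, Matrix.mul_smul, Matrix.mul_assoc, star_div₀, star_one,
      star_ofNat]
    module
  have hU₂ : U'ᴴ * ((2 : 𝕜) • J) * U = (2 : 𝕜) • J := by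
    rw [Matrix.mul_smul, Matrix.smul_mul, hU]
  rw [expand, hB, hU₂, Matrix.mul_smul, Matrix.smul_mul, Matrix.mul_smul, Matrix.smul_mul,
    ← smul_sub, smul_smul]
  norm_num

theorem conjTranspose_mul_conjTranspose_mul_mul_eq {R k l m : Type*} [Semiring R] [StarRing R]
    [Fintype k] [Fintype m] {E : Matrix k l R} {X : Matrix m k R} {J : Matrix m m R}
    {J' : Matrix k k R} (hX : Xᴴ * X * E = E) (hJ : J * X = X * J') :
    Eᴴ * (Xᴴ * J * X) = Eᴴ * J' :=
  calc Eᴴ * (Xᴴ * J * X) = Eᴴ * (Xᴴ * (X * J')) := by rw [Matrix.mul_assoc Xᴴ, hJ]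
    _ = (Xᴴ * X * E)ᴴ * J' := by
        rw [conjTranspose_mul, conjTranspose_mul, conjTranspose_conjTranspose, Matrix.mul_assoc,
          Matrix.mul_assoc]
    _ = Eᴴ * J' := by rw [hX]

theorem blockDiagonal_const_mul_of_eq_prodMap {R m ι κ : Type*} [Semiring R] [Fintype m]
    [Fintype ι] [Fintype κ] [DecidableEq m] [DecidableEq ι] [DecidableEq κ]
    (f : ι → κ) (J : Matrix m m R) :
    blockDiagonal (fun _ : ι => J) *
        of (fun (p : m × ι) (q : m × κ) => if q = (p.1, f p.2) then (1 : R) else 0) =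
      of (fun (p : m × ι) (q : m × κ) => if q = (p.1, f p.2) then (1 : R) else 0) *
        blockDiagonal (fun _ : κ => J) := by
  ext ⟨a, i⟩ ⟨b, j⟩
  simp only [mul_apply, blockDiagonal_apply, of_apply, Prod.mk.injEq, ite_and, mul_ite, mul_one,
    mul_zero, Fintype.sum_prod_type, Finset.sum_ite_irrel, Finset.sum_const_zero,
    Finset.sum_ite_eq, Finset.mem_univ, ↓reduceIte, ite_mul, one_mul, zero_mul, Finset.sum_ite_eq']
  rw [Finset.sum_eq_single i] <;> aesop

end Matrix

theorem conjTranspose_ETop_mul_ETop_mul_EMid (n M : ℕ) :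
    (ETop n M)ᴴ * ETop n M * EMid n M = EMid n M := by
  ext ⟨a, i⟩ ⟨b, j⟩
  simp [Matrix.mul_apply, ETop, EMid, Fintype.sum_prod_type, ite_and,
    apply_ite (starRingEnd ℂ)]

theorem conjTranspose_EBot_mul_EBot_mul_EMid (n M : ℕ) :
    (EBot n M)ᴴ * EBot n M * EMid n M = EMid n M := by
  ext ⟨a, i⟩ ⟨b, j⟩
  simp [Matrix.mul_apply, EBot, EMid, Fintype.sum_prod_type, ite_and, -Fin.castSucc_succ,
    apply_ite (starRingEnd ℂ)]

theorem stmt_5_general (n M : ℕ) (J : Matrix (Fin n) (Fin n) ℂ)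
    (Bf B'f Uf U'f : Fin (M + 1) → Matrix (Fin n) (Fin n) ℂ)
    (𝒥 : Matrix (Fin n × Fin (M + 1)) (Fin n × Fin (M + 1)) ℂ)
    (h𝒥 : 𝒥 = Matrix.blockDiagonal fun _ => J)
    (hU : (Matrix.blockDiagonal U'f)ᴴ * 𝒥 * Matrix.blockDiagonal Uf = 𝒥)
    (hB : Matrix.blockDiagonal Bf - (Matrix.blockDiagonal B'f)ᴴ = (2 : ℂ) • 𝒥)
    (𝔹 𝔻 𝔹' 𝔻' : Matrix (Fin n × Fin (M + 1)) (Fin n × Fin (M + 2)) ℂ)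
    (h𝔹 : 𝔹 = (Matrix.blockDiagonal B'f)ᴴ * Matrix.blockDiagonal Uf * EBot n M
      + Matrix.blockDiagonal Bf * ETop n M)
    (h𝔻 : 𝔻 = (1/2 : ℂ) • (Matrix.blockDiagonal Uf * EBot n M + ETop n M))
    (h𝔹' : 𝔹' = (Matrix.blockDiagonal Bf)ᴴ * Matrix.blockDiagonal U'f * EBot n M
      + Matrix.blockDiagonal B'f * ETop n M)
    (h𝔻' : 𝔻' = (1/2 : ℂ) • (Matrix.blockDiagonal U'f * EBot n M + ETop n M)) :
    (𝔻' * EMid n M)ᴴ * 𝔹 - (𝔹' * EMid n M)ᴴ * 𝔻 = 0 := by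
  subst h𝒥
  have hJT :
      (EMid n M)ᴴ * ((ETop n M)ᴴ * Matrix.blockDiagonal (fun _ : Fin (M + 1) => J) * ETop n M)
        = (EMid n M)ᴴ * Matrix.blockDiagonal (fun _ : Fin (M + 2) => J) :=
    Matrix.conjTranspose_mul_conjTranspose_mul_mul_eq
      (conjTranspose_ETop_mul_ETop_mul_EMid n M)
      (Matrix.blockDiagonal_const_mul_of_eq_prodMap Fin.succ J)
  have hJL :
      (EMid n M)ᴴ * ((EBot n M)ᴴ * Matrix.blockDiagonal (fun _ : Fin (M + 1) => J) * EBot n M)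
        = (EMid n M)ᴴ * Matrix.blockDiagonal (fun _ : Fin (M + 2) => J) :=
    Matrix.conjTranspose_mul_conjTranspose_mul_mul_eq
      (conjTranspose_EBot_mul_EBot_mul_EMid n M)
      (Matrix.blockDiagonal_const_mul_of_eq_prodMap Fin.castSucc J)
  have hmid : (𝔻' * EMid n M)ᴴ * 𝔹 - (𝔹' * EMid n M)ᴴ * 𝔻
      = (EMid n M)ᴴ * (𝔻'ᴴ * 𝔹 - 𝔹'ᴴ * 𝔻) := by
    simp only [Matrix.conjTranspose_mul, Matrix.mul_assoc, Matrix.mul_sub]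
  rw [hmid, h𝔹, h𝔻, h𝔹', h𝔻', Matrix.conjTranspose_mul_sub_conjTranspose_mul_eq_sub hU hB,
    Matrix.mul_sub, hJT, hJL, sub_self]

/-- Lemma 2.4 (second identity): `𝔻_m'* 𝔹 - 𝔹_m'* 𝔻 = 0`, where the subscript `m`
denotes deletion of the first and last `n` columns. Here `N = M + 1 ≥ 2`. -/
theorem stmt_5 (n M : ℕ) (hM : 1 ≤ M) (J : Matrix (Fin n) (Fin n) ℂ)
    (Bf B'f Uf U'f : Fin (M + 1) → Matrix (Fin n) (Fin n) ℂ)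
    (𝒥 : Matrix (Fin n × Fin (M + 1)) (Fin n × Fin (M + 1)) ℂ)
    (h𝒥 : 𝒥 = Matrix.blockDiagonal fun _ => J)
    (hU : (Matrix.blockDiagonal U'f)ᴴ * 𝒥 * Matrix.blockDiagonal Uf = 𝒥)
    (hB : Matrix.blockDiagonal Bf - (Matrix.blockDiagonal B'f)ᴴ = (2 : ℂ) • 𝒥)
    (𝔹 𝔻 𝔹' 𝔻' : Matrix (Fin n × Fin (M + 1)) (Fin n × Fin (M + 2)) ℂ)
    (h𝔹 : 𝔹 = (Matrix.blockDiagonal B'f)ᴴ * Matrix.blockDiagonal Uf * EBot n M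
      + Matrix.blockDiagonal Bf * ETop n M)
    (h𝔻 : 𝔻 = (1/2 : ℂ) • (Matrix.blockDiagonal Uf * EBot n M + ETop n M))
    (h𝔹' : 𝔹' = (Matrix.blockDiagonal Bf)ᴴ * Matrix.blockDiagonal U'f * EBot n M
      + Matrix.blockDiagonal B'f * ETop n M)
    (h𝔻' : 𝔻' = (1/2 : ℂ) • (Matrix.blockDiagonal U'f * EBot n M + ETop n M)) :
    (𝔻' * EMid n M)ᴴ * 𝔹 - (𝔹' * EMid n M)ᴴ * 𝔻 = 0 :=
  stmt_5_general n M J Bf B'f Uf U'f 𝒥 h𝒥 hU hB 𝔹 𝔻 𝔹' 𝔻' h𝔹 h𝔻 h𝔹' h𝔻'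
end

section
/- With the setup above, if v ∈ ℂ^{n(N+1)} satisfies 𝔹(λ)v = 0 and 𝔻(λ)v = 0, then v = 0. Consequently the restrictions 𝔹(λ)|_{ker 𝔻(λ)} and 𝔻(λ)|_{ker 𝔹(λ)} are injective. -/
/-
Write `v⊤ = E_⊤ v` and `v⊥ = E_⊥ v`. The equation `𝔻 v = 0` says `𝒰 v⊥ = -v⊤`; substituting
this into `𝔹 v` gives `(ℬ(λ) - ℬ(λ̄)*) v⊤ = 2 𝒥 v⊤`. So `𝔹 v = 0` forces `v⊤ = 0` because `𝒥` is
invertible, then `v⊥ = 0` because `𝒰` is invertible, and `v⊤`, `v⊥` together cover every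
coordinate of `v`.
-/

open scoped Matrix

open Matrix

lemma ETop_mulVec (n M : ℕ) (v : Fin n × Fin (M + 2) → ℂ) :
    ETop n M *ᵥ v = fun p => v (p.1, p.2.succ) := by
  funext p
  simp [ETop, mulVec, dotProduct]

lemma EBot_mulVec (n M : ℕ) (v : Fin n × Fin (M + 2) → ℂ) :
    EBot n M *ᵥ v = fun p => v (p.1, p.2.castSucc) := by
  funext p
  simp [EBot, mulVec, dotProduct]

lemma eq_zero_of_ETop_mulVec_eq_zero_of_EBot_mulVec_eq_zero {n M : ℕ}
    {v : Fin n × Fin (M + 2) → ℂ} (hT : ETop n M *ᵥ v = 0) (hB : EBot n M *ᵥ v = 0) :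
    v = 0 := by
  rw [ETop_mulVec] at hT
  rw [EBot_mulVec] at hB
  funext ⟨i, k⟩
  induction k using Fin.cases with
  | zero => exact congrFun hB (i, 0)
  | succ j => exact congrFun hT (i, j)

lemma Matrix.isUnit_blockDiagonal {o m R : Type*} [Fintype o] [DecidableEq o] [Fintype m]
    [DecidableEq m] [CommRing R] {A : o → Matrix m m R} (hA : ∀ i, IsUnit (A i)) :
    IsUnit (blockDiagonal A) := by
  rw [isUnit_iff_isUnit_det, det_blockDiagonal, IsUnit.prod_univ_iff]
  exact fun i => (isUnit_iff_isUnit_det _).mp (hA i)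

lemma Matrix.eq_zero_of_isUnit_of_mulVec_eq_zero {m K : Type*} [Fintype m] [DecidableEq m]
    [Field K] {A : Matrix m m K} (hA : IsUnit A) {v : m → K} (hv : A *ᵥ v = 0) : v = 0 :=
  eq_zero_of_mulVec_eq_zero ((isUnit_iff_isUnit_det A).mp hA).ne_zero hv

/-- If `𝔹(λ)v = 0` and `𝔻(λ)v = 0` then `v = 0`; hence the restrictions
`𝔹(λ)|ker 𝔻(λ)` and `𝔻(λ)|ker 𝔹(λ)` are injective. -/
theorem stmt_6 (n M : ℕ) (J : Matrix (Fin n) (Fin n) ℂ) (hJ : IsUnit J)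
    (Bf B'f Uf : Fin (M + 1) → Matrix (Fin n) (Fin n) ℂ)
    (hUinv : ∀ j, IsUnit (Uf j))
    (𝒥 : Matrix (Fin n × Fin (M + 1)) (Fin n × Fin (M + 1)) ℂ)
    (h𝒥 : 𝒥 = Matrix.blockDiagonal fun _ => J)
    (hB : Matrix.blockDiagonal Bf - (Matrix.blockDiagonal B'f)ᴴ = (2 : ℂ) • 𝒥)
    (𝔹 𝔻 : Matrix (Fin n × Fin (M + 1)) (Fin n × Fin (M + 2)) ℂ)
    (h𝔹 : 𝔹 = (Matrix.blockDiagonal B'f)ᴴ * Matrix.blockDiagonal Uf * EBot n M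
      + Matrix.blockDiagonal Bf * ETop n M)
    (h𝔻 : 𝔻 = (1/2 : ℂ) • (Matrix.blockDiagonal Uf * EBot n M + ETop n M)) :
    ∀ v : Fin n × Fin (M + 2) → ℂ, 𝔹.mulVec v = 0 → 𝔻.mulVec v = 0 → v = 0 := by
  intro v h𝔹v h𝔻v
  set vT := ETop n M *ᵥ v
  set vB := EBot n M *ᵥ v
  have hUvB : blockDiagonal Uf *ᵥ vB = -vT := by
    rw [h𝔻, smul_mulVec, add_mulVec, ← mulVec_mulVec, smul_eq_zero] at h𝔻v
    exact eq_neg_of_add_eq_zero_left (h𝔻v.resolve_left (by norm_num))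
  have h𝒥vT : 𝒥 *ᵥ vT = 0 := by
    have h2𝒥 : ((2 : ℂ) • 𝒥) *ᵥ vT = 𝔹 *ᵥ v := by
      rw [← hB, sub_mulVec, h𝔹, add_mulVec, ← mulVec_mulVec, ← mulVec_mulVec, ← mulVec_mulVec,
        hUvB, mulVec_neg]
      abel
    rw [h𝔹v, smul_mulVec, smul_eq_zero] at h2𝒥
    exact h2𝒥.resolve_left two_ne_zero
  have hvT : vT = 0 :=
    eq_zero_of_isUnit_of_mulVec_eq_zero (h𝒥 ▸ isUnit_blockDiagonal fun _ => hJ) h𝒥vT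
  have hvB : vB = 0 :=
    eq_zero_of_isUnit_of_mulVec_eq_zero (isUnit_blockDiagonal hUinv) (by rw [hUvB, hvT, neg_zero])
  exact eq_zero_of_ETop_mulVec_eq_zero_of_EBot_mulVec_eq_zero hvT hvB
end
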